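/- (NCP linearization identity) Consider the NCP recursion x₁(z) = (A₁z) ∘ s₁ and x_n(z) = (A_nz) ∘ (S_n x_{n-1}(z)). Then for every z, z ∗ x_{k-1}(z) = (∏_{i=1}^{k-1} I ⊗ (A_i • S_i)) (⊗_{i=1}^{k} z), where ∗ is the Khatri–Rao (Kronecker) product of vectors, • the face-splitting product, ⊗ the Kronecker product, I identity matrices of appropriate sizes, and in particular x_k(z) = (A_k • S_k)(∏_{i=1}^{k-1} I ⊗ (A_i • S_i))(⊗_{i=1}^k z). -/

import Mathlib

open Matrix Kronecker

/-- Face-splitting (row-wise Kronecker) product. -/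
def faceSplit {I J K : Type*} (A : Matrix I J ℝ) (B : Matrix I K ℝ) :
    Matrix I (J × K) ℝ := Matrix.of fun i jk => A i jk.1 * B i jk.2

/-- Index type for the `n`-fold Kronecker power of `ℝ^d`. -/
def Tpow (d : ℕ) : ℕ → Type
  | 0 => Unit
  | n + 1 => Fin d × Tpow d n

instance TpowFintype (d : ℕ) : (n : ℕ) → Fintype (Tpow d n)
  | 0 => inferInstanceAs (Fintype Unit)
  | n + 1 => letI := TpowFintype d n; inferInstanceAs (Fintype (Fin d × Tpow d n))

/-- The `n`-fold Kronecker power `⊗_{i=1}^n z` of a vector `z ∈ ℝ^d`. -/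
def zpow {d : ℕ} (z : Fin d → ℝ) : (n : ℕ) → Tpow d n → ℝ
  | 0, _ => 1
  | n + 1, p => z p.1 * zpow z n p.2

/-- The linearization matrix `P_n = ∏_{i=1}^{n} I ⊗ (A_i • S_i)` of the NCP model (with
`A₁ • s₁` as innermost factor), defined recursively by
`P_1 = I_d ⊗ (A₁ • s₁)` and `P_{n+1} = (I ⊗ (A_{n+1} • S_{n+1})) (I ⊗ P_n)`. -/
noncomputable def Pmat {d m : ℕ} (A : ℕ → Matrix (Fin m) (Fin d) ℝ)
    (S : ℕ → Matrix (Fin m) (Fin m) ℝ) (s₁ : Fin m → ℝ) :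
    (n : ℕ) → Matrix (Fin d × Fin m) (Tpow d (n + 1)) ℝ
  | 0 => 0
  | 1 => (1 : Matrix (Fin d) (Fin d) ℝ) ⊗ₖ
      (Matrix.of fun (j : Fin m) (t : Tpow d 1) => A 1 j t.1 * s₁ j)
  | n + 2 => ((1 : Matrix (Fin d) (Fin d) ℝ) ⊗ₖ faceSplit (A (n + 2)) (S (n + 2))) *
      ((1 : Matrix (Fin d) (Fin d) ℝ) ⊗ₖ Pmat A S s₁ (n + 1))

lemma faceSplit_mulVec {m d e : ℕ} (A : Matrix (Fin m) (Fin d) ℝ)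
    (S : Matrix (Fin m) (Fin e) ℝ) (z : Fin d → ℝ) (x : Fin e → ℝ) :
    (faceSplit A S).mulVec (fun tj : Fin d × Fin e => z tj.1 * x tj.2) =
      fun j => A.mulVec z j * S.mulVec x j := by
  funext j
  simp only [faceSplit, mulVec, dotProduct, Matrix.of_apply, Fintype.sum_prod_type]
  rw [Finset.sum_mul_sum]
  apply Finset.sum_congr rfl; intro t _
  apply Finset.sum_congr rfl; intro k _
  ring

lemma kron_one_mulVec {d : ℕ} {K L : Type*} [Fintype L] [DecidableEq K]
    (P : Matrix K L ℝ) (z : Fin d → ℝ) (w : L → ℝ) :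
    ((1 : Matrix (Fin d) (Fin d) ℝ) ⊗ₖ P).mulVec (fun ct : Fin d × L => z ct.1 * w ct.2) =
      fun ar : Fin d × K => z ar.1 * P.mulVec w ar.2 := by
  funext ar
  simp only [mulVec, dotProduct, kroneckerMap_apply, Fintype.sum_prod_type,
    Matrix.one_apply, ite_mul, one_mul, zero_mul]
  rw [Finset.sum_comm]
  simp only [Finset.sum_ite_eq, Finset.mem_univ, if_true, Finset.mul_sum]
  apply Finset.sum_congr rfl; intro t _
  ring

lemma kron_one_mulVec' {d : ℕ} {K L : Type*} [Fintype L] [DecidableEq K]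
    (P : Matrix K L ℝ) (z : Fin d → ℝ) (w : L → ℝ) (v : Fin d × L → ℝ)
    (hv : ∀ c t, v (c, t) = z c * w t) :
    ((1 : Matrix (Fin d) (Fin d) ℝ) ⊗ₖ P).mulVec v =
      fun ar : Fin d × K => z ar.1 * P.mulVec w ar.2 := by
  have : v = fun ct : Fin d × L => z ct.1 * w ct.2 := by
    funext ct; exact hv ct.1 ct.2
  rw [this, kron_one_mulVec]

/-- NCP linearization identity: for the recursion `x₁ = (A₁z) ∘ s₁`,
`x_n = (A_nz) ∘ (S_n x_{n-1})`, one has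
`z ∗ x_n(z) = (∏_{i=1}^{n} I ⊗ (A_i • S_i)) (⊗_{i=1}^{n+1} z)` and in particular
`x_{n+1}(z) = (A_{n+1} • S_{n+1}) (∏_{i=1}^{n} I ⊗ (A_i • S_i)) (⊗_{i=1}^{n+1} z)`. -/
theorem ncp_linearization {d m : ℕ} (A : ℕ → Matrix (Fin m) (Fin d) ℝ)
    (S : ℕ → Matrix (Fin m) (Fin m) ℝ) (s₁ : Fin m → ℝ) (z : Fin d → ℝ)
    (x : ℕ → Fin m → ℝ)
    (hx1 : x 1 = fun j => (A 1).mulVec z j * s₁ j)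
    (hxn : ∀ n, 1 ≤ n →
      x (n + 1) = fun j => (A (n + 1)).mulVec z j * (S (n + 1)).mulVec (x n) j) :
    ∀ n, 1 ≤ n →
      ((fun tj : Fin d × Fin m => z tj.1 * x n tj.2) =
          (Pmat A S s₁ n).mulVec (zpow z (n + 1))) ∧
        x (n + 1) =
          (faceSplit (A (n + 1)) (S (n + 1))).mulVec
            ((Pmat A S s₁ n).mulVec (zpow z (n + 1))) := by
  have key : ∀ n, 1 ≤ n →
      (fun tj : Fin d × Fin m => z tj.1 * x n tj.2) =
        (Pmat A S s₁ n).mulVec (zpow z (n + 1)) := by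
    intro n hn
    induction n with
    | zero => omega
    | succ k ih =>
      rcases Nat.eq_or_lt_of_le hn with h1 | h2
      · -- k + 1 = 1, base case
        have hk : k = 0 := by omega
        subst hk
        show _ = (Pmat A S s₁ 1).mulVec (zpow z 2)
        rw [Pmat]
        have : zpow z 2 = fun ct : Fin d × Tpow d 1 => z ct.1 * zpow z 1 ct.2 := rfl
        erw [this, kron_one_mulVec]
        funext tj
        simp only [mulVec, dotProduct, Matrix.of_apply, hx1, zpow]
        show z tj.1 * ((∑ t : Fin d, A 1 tj.2 t * z t) * s₁ tj.2) =
          z tj.1 * ∑ i : Fin d × Unit, A 1 tj.2 i.1 * s₁ tj.2 * (z i.1 * 1)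
        rw [Fintype.sum_prod_type]
        simp only [Finset.sum_const, Finset.card_univ, Fintype.card_unit, one_smul,
          Finset.sum_mul, Finset.mul_sum]
        apply Finset.sum_congr rfl; intro t _
        ring
      · -- k ≥ 1, inductive step
        have hk : 1 ≤ k := by omega
        have ihk := ih hk
        obtain ⟨k, rfl⟩ : ∃ j, k = j + 1 := ⟨k - 1, by omega⟩
        have e2 : (faceSplit (A (k + 2)) (S (k + 2))).mulVec
            ((Pmat A S s₁ (k + 1)).mulVec (zpow z (k + 2))) = x (k + 2) := by
          rw [← ihk, faceSplit_mulVec, hxn (k + 1) hk]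
        show (fun tj : Fin d × Fin m => z tj.1 * x (k + 2) tj.2) =
          (Pmat A S s₁ (k + 2)).mulVec (zpow z (k + 3))
        rw [Pmat]
        erw [← Matrix.mulVec_mulVec,
          kron_one_mulVec' (Pmat A S s₁ (k + 1)) z (zpow z (k + 2)) (zpow z (k + 3))
            (fun _ _ => rfl),
          kron_one_mulVec' (faceSplit (A (k + 2)) (S (k + 2))) z
            ((Pmat A S s₁ (k + 1)).mulVec (zpow z (k + 2))) _ (fun _ _ => rfl),
          e2]
  intro n hn
  refine ⟨key n hn, ?_⟩
  rw [← key n hn, faceSplit_mulVec, hxn n hn]
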